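/- arXiv:1401.3639 — 2 statements merged into one kernel-verified Lean document; each statement's English description precedes it below -/
import Mathlib

section
/- For all nonnegative integers n and m with 2m ≤ n, sqrt(n!) · 2^(n/2 - 2m) / m! ≤ (2n)^((n-2m)/2). -/
/-!
Writing `n! = (2m)! · n(n-1)⋯(2m+1) ≤ (2m)! · n^(n-2m)` and `(2m)! = C(2m,m) (m!)² ≤ 4^m (m!)²`
gives `√(n!) ≤ 2^m m! n^((n-2m)/2)`; multiplying by `2^(n/2-2m)` turns `2^m n^((n-2m)/2)` into
`(2n)^((n-2m)/2)`.
-/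

open Nat Real

lemma Nat.factorial_two_mul_le_four_pow_mul_sq (m : ℕ) : (2 * m)! ≤ 4 ^ m * (m !) ^ 2 := by
  have h := add_choose_mul_factorial_mul_factorial m m
  rw [← two_mul, ← centralBinom_eq_two_mul_choose] at h
  rw [← h, sq, ← mul_assoc]
  gcongr
  exact centralBinom_le_four_pow m

lemma Nat.factorial_le_factorial_mul_pow {k n : ℕ} (h : k ≤ n) : n ! ≤ k ! * n ^ (n - k) := by
  have h' := factorial_mul_descFactorial (Nat.sub_le n k)
  rw [Nat.sub_sub_self h] at h'
  rw [← h']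
  gcongr
  exact descFactorial_le_pow n (n - k)

lemma Nat.factorial_le_four_pow_mul_sq_mul_pow {n m : ℕ} (h : 2 * m ≤ n) :
    n ! ≤ 4 ^ m * (m !) ^ 2 * n ^ (n - 2 * m) :=
  (factorial_le_factorial_mul_pow h).trans (by gcongr; exact factorial_two_mul_le_four_pow_mul_sq m)

lemma Real.sqrt_factorial_le {n m : ℕ} (h : 2 * m ≤ n) :
    √(n ! : ℝ) ≤ 2 ^ m * m ! * (n : ℝ) ^ (((n : ℝ) - 2 * m) / 2) := by
  have hsq : ((n : ℝ) ^ (((n : ℝ) - 2 * m) / 2)) ^ 2 = (n : ℝ) ^ (n - 2 * m) := by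
    rw [← rpow_two, ← rpow_mul n.cast_nonneg, ← rpow_natCast, Nat.cast_sub h]
    push_cast
    ring_nf
  rw [sqrt_le_left (by positivity), mul_pow, mul_pow, hsq, ← pow_mul, mul_comm m, pow_mul]
  norm_num only
  exact_mod_cast factorial_le_four_pow_mul_sq_mul_pow h

theorem stmt_3 (n m : ℕ) (h : 2 * m ≤ n) :
    Real.sqrt (n !) * (2 : ℝ) ^ ((n : ℝ) / 2 - 2 * m) / (m ! : ℝ) ≤
      (2 * (n : ℝ)) ^ (((n : ℝ) - 2 * m) / 2) := by
  have hpow2 : (2 : ℝ) ^ m * (2 : ℝ) ^ ((n : ℝ) / 2 - 2 * m) = (2 : ℝ) ^ (((n : ℝ) - 2 * m) / 2) := by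
    rw [← rpow_natCast, ← rpow_add two_pos]
    ring_nf
  rw [div_le_iff₀ (by positivity), mul_rpow zero_le_two n.cast_nonneg, ← hpow2]
  calc √(n ! : ℝ) * 2 ^ ((n : ℝ) / 2 - 2 * m)
      ≤ 2 ^ m * m ! * (n : ℝ) ^ (((n : ℝ) - 2 * m) / 2) * 2 ^ ((n : ℝ) / 2 - 2 * m) := by
        gcongr
        exact sqrt_factorial_le h
    _ = _ := by ring
end

section
/- For every complex number z and every nonnegative integer n, the Hermite polynomial satisfies |H_n(z)| ≤ sqrt(n! · 2^n) · exp(sqrt(2n) · |z|). -/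
/-!
Bound the explicit sum termwise. With `k = n - 2m`, the coefficient `n! 2^k / m!` is at most
`√(n! 2^n) · √(2n)^k`: squared, this is `n! ≤ 4^m (m!)^2 n^k`, which follows from
`(2m)! = C(2m, m) (m!)^2 ≤ 4^m (m!)^2` and `n! / (2m)! ≤ n^k`. What remains,
`∑_m c^(n-2m) / (n-2m)!` with `c = √(2n) |z|`, is part of the series of `exp c`.
-/

open Nat Finset

/-- The physicists' Hermite polynomial, via its explicit formula, for a complex argument. -/
noncomputable def hermiteC (n : ℕ) (z : ℂ) : ℂ :=
  (n ! : ℂ) * ∑ m ∈ Finset.range (n / 2 + 1),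
    (-1) ^ m * (2 * z) ^ (n - 2 * m) / ((m ! : ℂ) * ((n - 2 * m)! : ℂ))

namespace Nat

theorem factorial_two_mul_le_four_pow_mul_sq_s4 (m : ℕ) : (2 * m)! ≤ 4 ^ m * m ! ^ 2 := by
  have h := choose_mul_factorial_mul_factorial (show m ≤ 2 * m by omega)
  rw [show 2 * m - m = m by omega, ← centralBinom_eq_two_mul_choose] at h
  calc (2 * m)! = centralBinom m * m ! ^ 2 := by rw [← h]; ring
    _ ≤ 4 ^ m * m ! ^ 2 := Nat.mul_le_mul_right _ (centralBinom_le_four_pow m)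

theorem factorial_add_le (a k : ℕ) : (a + k)! ≤ a ! * (a + k) ^ k := by
  have h := factorial_mul_descFactorial (show k ≤ a + k by omega)
  rw [Nat.add_sub_cancel] at h
  rw [← h]
  exact Nat.mul_le_mul_left _ (descFactorial_le_pow _ _)

theorem factorial_two_mul_add_le (m k : ℕ) :
    (2 * m + k)! ≤ 4 ^ m * m ! ^ 2 * (2 * m + k) ^ k :=
  (factorial_add_le _ _).trans (Nat.mul_le_mul_right _ (factorial_two_mul_le_four_pow_mul_sq_s4 m))

end Nat

open Real

theorem factorial_mul_two_pow_div_factorial_le (m k : ℕ) :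
    ((2 * m + k)! : ℝ) * 2 ^ k / m ! ≤
      √(((2 * m + k)! : ℝ) * 2 ^ (2 * m + k)) * √(2 * (2 * m + k)) ^ k := by
  have hfact : ((2 * m + k)! : ℝ) ≤ 4 ^ m * (m ! : ℝ) ^ 2 * (2 * m + k) ^ k := by
    exact_mod_cast factorial_two_mul_add_le m k
  have hrhs : (√(((2 * m + k)! : ℝ) * 2 ^ (2 * m + k)) * √(2 * (2 * m + k)) ^ k) ^ 2 =
      (2 * m + k)! * 2 ^ (2 * m + k) * (2 * (2 * m + k)) ^ k := by
    rw [mul_pow, ← pow_mul, mul_comm k 2, pow_mul, Real.sq_sqrt (by positivity),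
      Real.sq_sqrt (by positivity)]
  rw [div_le_iff₀ (by positivity),
    ← pow_le_pow_iff_left₀ (by positivity) (by positivity) two_ne_zero,
    mul_pow _ (m ! : ℝ), hrhs]
  calc ((2 * m + k)! * 2 ^ k : ℝ) ^ 2
      = (2 * m + k)! * (2 * m + k)! * 2 ^ (2 * k) := by ring
    _ ≤ (2 * m + k)! * (4 ^ m * (m ! : ℝ) ^ 2 * (2 * m + k) ^ k) * 2 ^ (2 * k) := by gcongr
    _ = (2 * m + k)! * 2 ^ (2 * m + k) * (2 * (2 * m + k)) ^ k * (m ! : ℝ) ^ 2 := by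
      rw [mul_pow (2 : ℝ), show (4 : ℝ) ^ m = 2 ^ (2 * m) by rw [pow_mul]; norm_num]; ring

theorem sum_range_pow_sub_two_mul_div_factorial_le_exp {x : ℝ} (hx : 0 ≤ x) (n : ℕ) :
    ∑ m ∈ range (n / 2 + 1), x ^ (n - 2 * m) / (n - 2 * m)! ≤ exp x := by
  have hinj : Set.InjOn (fun m => n - 2 * m) (range (n / 2 + 1)) := by
    intro a ha b hb hab
    simp only [coe_range, Set.mem_Iio] at ha hb hab
    omega
  have hsub : (range (n / 2 + 1)).image (fun m => n - 2 * m) ⊆ range (n + 1) := by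
    intro j hj
    simp only [mem_image, mem_range] at hj ⊢
    omega
  calc ∑ m ∈ range (n / 2 + 1), x ^ (n - 2 * m) / (n - 2 * m)!
      = ∑ j ∈ (range (n / 2 + 1)).image (fun m => n - 2 * m), x ^ j / j ! :=
        (sum_image (f := fun j => x ^ j / j !) hinj).symm
    _ ≤ ∑ j ∈ range (n + 1), x ^ j / j ! :=
        sum_le_sum_of_subset_of_nonneg hsub fun _ _ _ => by positivity
    _ ≤ exp x := sum_le_exp_of_nonneg hx _

theorem norm_hermiteC_term_le {n m : ℕ} (h : 2 * m ≤ n) (z : ℂ) :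
    ‖(n ! : ℂ) * ((-1) ^ m * (2 * z) ^ (n - 2 * m) / ((m ! : ℂ) * ((n - 2 * m)! : ℂ)))‖ ≤
      √((n ! : ℝ) * 2 ^ n) * (√(2 * n) * ‖z‖) ^ (n - 2 * m) / (n - 2 * m)! := by
  obtain ⟨k, rfl⟩ := Nat.exists_eq_add_of_le h
  have hnorm : ‖((2 * m + k)! : ℂ) * ((-1) ^ m * (2 * z) ^ k / ((m ! : ℂ) * (k ! : ℂ)))‖ =
      ((2 * m + k)! : ℝ) * 2 ^ k / m ! * (‖z‖ ^ k / k !) := by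
    simp only [norm_mul, norm_div, norm_pow, norm_neg, norm_one, one_pow, Complex.norm_natCast,
      Complex.norm_ofNat]
    ring
  rw [Nat.add_sub_cancel_left, hnorm]
  calc ((2 * m + k)! : ℝ) * 2 ^ k / m ! * (‖z‖ ^ k / k !)
      ≤ √(((2 * m + k)! : ℝ) * 2 ^ (2 * m + k)) * √(2 * (2 * m + k)) ^ k *
          (‖z‖ ^ k / k !) := by
        gcongr
        exact factorial_mul_two_pow_div_factorial_le m k
    _ = _ := by push_cast; ring

theorem stmt_4 (n : ℕ) (z : ℂ) :
    ‖hermiteC n z‖ ≤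
      Real.sqrt (n ! * 2 ^ n) * Real.exp (Real.sqrt (2 * n) * ‖z‖) := by
  calc ‖hermiteC n z‖
      ≤ ∑ m ∈ range (n / 2 + 1),
          √((n ! : ℝ) * 2 ^ n) * (√(2 * n) * ‖z‖) ^ (n - 2 * m) / (n - 2 * m)! := by
        rw [hermiteC, mul_sum]
        refine (norm_sum_le _ _).trans (sum_le_sum fun m hm => norm_hermiteC_term_le ?_ z)
        have := mem_range.mp hm
        omega
    _ = √((n ! : ℝ) * 2 ^ n) *
          ∑ m ∈ range (n / 2 + 1), (√(2 * n) * ‖z‖) ^ (n - 2 * m) / (n - 2 * m)! := by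
        simp only [mul_sum, mul_div_assoc]
    _ ≤ √(n ! * 2 ^ n) * exp (√(2 * n) * ‖z‖) := by
        gcongr
        exact sum_range_pow_sub_two_mul_div_factorial_le_exp (by positivity) n
end
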